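/- There is an absolute constant c > 0 with the following property. Let x_1, …, x_N be real numbers and let H ≥ 1. Suppose that ‖x_n‖ ≥ H^{−1} for every n with 1 ≤ n ≤ N. Then Σ_{1≤h≤H} | Σ_{n=1}^{N} e(h x_n) | ≥ cN. -/

import Mathlib

/-- `e(z) = e^{2πiz}`. -/
noncomputable def e (z : ℝ) : ℂ := Complex.exp (2 * Real.pi * Complex.I * z)

/-- `‖θ‖`, the distance from `θ` to the nearest integer. -/
noncomputable def nint (θ : ℝ) : ℝ := |θ - round θ|

/-!
Let `K = ⌊H⌋`, `A = π / (K + 1)` and `P(θ) = ∑_{1 ≤ j ≤ K} sin (j A) e(j θ)`. The sine weights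
satisfy `w_{j-1} + w_{j+1} = 2 cos A · w_j` with `w_0 = w_{K+1} = 0` and `w_{K+1-j} = w_j`,
which gives the identity `(cos 2πθ - cos A) |P(θ)|² = sin A · Re P(θ)`.

If `‖x_n‖ ≥ 1/H` then `cos 2πx_n ≤ cos (2π/H)`, so summing `(cos 2πx_n - cos (2π/H)) |P(x_n)|² ≤ 0`
over `n` gives `(cos A - cos (2π/H)) ∑_n |P(x_n)|² ≤ sin A ∑_{h ≤ K} |S(h)|` with
`S(h) = ∑_n e(h x_n)`. Expanding `|P|²`, the diagonal contributes `(K + 1) N / 2` and the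
off-diagonal at most `2 K ∑_{h ≤ K} |S(h)|`. Since `cos A - cos (2π/H) ≍ 1/H²` and `sin A ≤ π/H`,
this yields `N ≤ 30 ∑_{h ≤ H} |S(h)|`.
-/

open Finset Real
open scoped ComplexConjugate

theorem quadratic_mul_sum_Icc_of_recurrence {R : Type*} [CommRing R] {w : ℕ → R} {c : R}
    (hw : ∀ i, w i + w (i + 2) = 2 * c * w (i + 1)) (u : R) (K : ℕ) :
    (u ^ 2 - 2 * c * u + 1) * ∑ j ∈ Icc 1 K, w j * u ^ j =
      w K * u ^ (K + 2) - w (K + 1) * u ^ (K + 1) + w 1 * u - w 0 * u ^ 2 := by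
  induction K with
  | zero => simp
  | succ K ih =>
    rw [sum_Icc_succ_top (by omega), mul_add, ih]
    linear_combination u ^ (K + 2) * hw K

lemma sum_Icc_one_reflect {M : Type*} [AddCommMonoid M] (f : ℕ → M) (K : ℕ) :
    ∑ j ∈ Icc 1 K, f (K + 1 - j) = ∑ j ∈ Icc 1 K, f j := by
  rw [← Ico_add_one_right_eq_Icc, sum_Ico_reflect f 1 (by omega : K + 1 ≤ K + 1 + 1)]
  congr 2; omega

lemma neg_sum_norm_le_re_sum_ofReal_mul {κ : Type*} (s : Finset κ) {a : κ → ℝ}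
    (ha : ∀ i ∈ s, |a i| ≤ 1) (z : κ → ℂ) : -∑ i ∈ s, ‖z i‖ ≤ (∑ i ∈ s, (a i : ℂ) * z i).re := by
  rw [Complex.re_sum, ← sum_neg_distrib]
  refine sum_le_sum fun i hi => ?_
  rw [Complex.re_ofReal_mul, neg_le]
  calc -(a i * (z i).re) ≤ |a i * (z i).re| := neg_le_abs _
    _ = |a i| * |(z i).re| := abs_mul _ _
    _ ≤ 1 * ‖z i‖ := mul_le_mul (ha i hi) (Complex.abs_re_le_norm _) (abs_nonneg _) zero_le_one
    _ = ‖z i‖ := one_mul _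

lemma sum_comp_le_sum_of_injOn {α β : Type*} {s : Finset α} {t : Finset β} {g : α → β}
    {f : β → ℝ} (hg : Set.InjOn g s) (hst : ∀ a ∈ s, g a ∈ t) (hf : ∀ b ∈ t, 0 ≤ f b) :
    ∑ a ∈ s, f (g a) ≤ ∑ b ∈ t, f b := by
  classical
  rw [← sum_image hg]
  exact sum_le_sum_of_subset_of_nonneg (image_subset_iff.2 hst) fun b hb _ => hf b hb

lemma cos_add_cos_add_two_mul (a b : ℝ) :
    Real.cos a + Real.cos (a + 2 * b) = 2 * Real.cos b * Real.cos (a + b) := by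
  rw [cos_add_cos, show (a + (a + 2 * b)) / 2 = a + b by ring,
    show (a - (a + 2 * b)) / 2 = -b by ring, Real.cos_neg]
  ring

lemma sin_add_sin_add_two_mul (a b : ℝ) :
    Real.sin a + Real.sin (a + 2 * b) = 2 * Real.cos b * Real.sin (a + b) := by
  rw [sin_add_sin, show (a + (a + 2 * b)) / 2 = a + b by ring,
    show (a - (a + 2 * b)) / 2 = -b by ring, Real.cos_neg]
  ring

lemma e_eq_exp_mul_I (θ : ℝ) : e θ = Complex.exp ((2 * π * θ : ℝ) * Complex.I) := by
  rw [e]; push_cast; ring_nf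

lemma e_add (a b : ℝ) : e (a + b) = e a * e b := by
  simp only [e_eq_exp_mul_I, ← Complex.exp_add]; push_cast; ring_nf

lemma e_zero : e 0 = 1 := by simp [e]

lemma e_natCast_mul (n : ℕ) (θ : ℝ) : e (n * θ) = e θ ^ n := by
  rw [e, e, ← Complex.exp_nat_mul]; push_cast; ring_nf

lemma conj_e (θ : ℝ) : conj (e θ) = e (-θ) := by
  rw [e_eq_exp_mul_I, e_eq_exp_mul_I, ← Complex.exp_conj, map_mul, Complex.conj_ofReal,
    Complex.conj_I]
  push_cast; ring_nf

lemma norm_e (θ : ℝ) : ‖e θ‖ = 1 := by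
  rw [e_eq_exp_mul_I, Complex.norm_exp_ofReal_mul_I]

lemma e_mul_conj_self (θ : ℝ) : e θ * conj (e θ) = 1 := by
  rw [conj_e, ← e_add, add_neg_cancel, e_zero]

lemma e_add_conj (θ : ℝ) : e θ + conj (e θ) = 2 * Real.cos (2 * π * θ) := by
  rw [Complex.add_conj, e_eq_exp_mul_I, Complex.exp_ofReal_mul_I_re]
  push_cast; ring

section SineWeight

variable (K : ℕ)

noncomputable def sineWeight (j : ℕ) : ℝ := Real.sin (j * (π / (K + 1)))

lemma sineWeight_recurrence (i : ℕ) :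
    sineWeight K i + sineWeight K (i + 2) = 2 * Real.cos (π / (K + 1)) * sineWeight K (i + 1) := by
  simp only [sineWeight]; push_cast
  convert sin_add_sin_add_two_mul (i * (π / (K + 1))) (π / (K + 1)) using 3 <;> ring

lemma sineWeight_zero : sineWeight K 0 = 0 := by simp [sineWeight]

lemma mul_pi_div_succ_self : ((K + 1 : ℕ) : ℝ) * (π / (K + 1)) = π := by
  push_cast; field_simp

lemma sineWeight_succ_self : sineWeight K (K + 1) = 0 := by
  rw [sineWeight, mul_pi_div_succ_self, Real.sin_pi]

lemma sineWeight_reflect {j : ℕ} (hj : j ≤ K + 1) : sineWeight K (K + 1 - j) = sineWeight K j := by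
  rw [sineWeight, Nat.cast_sub hj, sub_mul, mul_pi_div_succ_self, Real.sin_pi_sub, sineWeight]

lemma sineWeight_self : sineWeight K K = Real.sin (π / (K + 1)) := by
  rw [← sineWeight_reflect K (Nat.le_succ K), Nat.add_sub_cancel_left, sineWeight, Nat.cast_one,
    one_mul]

lemma sineWeight_one : sineWeight K 1 = Real.sin (π / (K + 1)) := by
  rw [sineWeight, Nat.cast_one, one_mul]

lemma abs_sineWeight_le_one (j : ℕ) : |sineWeight K j| ≤ 1 := Real.abs_sin_le_one _

lemma sum_Icc_cos_two_mul_pi_div_succ (hK : 1 ≤ K) :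
    ∑ j ∈ Icc 1 K, Real.cos (j * (2 * (π / (K + 1)))) = -1 := by
  set B := 2 * (π / (K + 1))
  have hB : B ≤ π := by
    rw [show B = 2 * π / (K + 1) by ring, div_le_iff₀ (by positivity)]
    have : (1 : ℝ) ≤ K := by exact_mod_cast hK
    nlinarith [pi_pos]
  have hcos : Real.cos B < 1 := by
    simpa using cos_lt_cos_of_nonneg_of_le_pi le_rfl hB (by positivity)
  have hK2 : (K : ℝ) * B = 2 * π - B := by
    have := mul_pi_div_succ_self K; push_cast at this; linear_combination 2 * this
  have hK3 : ((K + 1 : ℕ) : ℝ) * B = 2 * π := by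
    have := mul_pi_div_succ_self K; linear_combination 2 * this
  have hrec (i : ℕ) : Real.cos (i * B) + Real.cos ((i + 2 : ℕ) * B) =
      2 * Real.cos B * Real.cos ((i + 1 : ℕ) * B) := by
    push_cast
    convert cos_add_cos_add_two_mul (i * B) B using 3 <;> ring
  have key := quadratic_mul_sum_Icc_of_recurrence (w := fun i : ℕ => Real.cos (i * B)) hrec 1 K
  simp only [one_pow, mul_one, hK2, hK3, Real.cos_two_pi_sub, Real.cos_two_pi, Nat.cast_one,
    one_mul, Nat.cast_zero, zero_mul, Real.cos_zero] at key
  have hne : 1 - 2 * Real.cos B + 1 ≠ 0 := by linarith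
  exact mul_left_cancel₀ hne (key.trans (by ring))

lemma sum_sineWeight_sq (hK : 1 ≤ K) : ∑ j ∈ Icc 1 K, sineWeight K j ^ 2 = (K + 1) / 2 := by
  simp only [sineWeight, sin_sq_eq_half_sub, mul_left_comm (2 : ℝ), sum_sub_distrib, ← sum_div,
    sum_Icc_cos_two_mul_pi_div_succ K hK, sum_const, Nat.card_Icc]
  simp only [add_tsub_cancel_right, nsmul_eq_mul]
  ring

end SineWeight

noncomputable def trigPoly (w : ℕ → ℝ) (J : Finset ℕ) (θ : ℝ) : ℂ := ∑ j ∈ J, (w j : ℂ) * e (j * θ)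

lemma trigPoly_eq_sum_pow (w : ℕ → ℝ) (J : Finset ℕ) (θ : ℝ) :
    trigPoly w J θ = ∑ j ∈ J, (w j : ℂ) * e θ ^ j := by
  simp only [trigPoly, e_natCast_mul]

section SineTrigPoly

variable (K : ℕ) (θ : ℝ)

lemma two_mul_cos_sub_mul_sineTrigPoly :
    (2 * Real.cos (2 * π * θ) - 2 * Real.cos (π / (K + 1))) * trigPoly (sineWeight K) (Icc 1 K) θ =
      Real.sin (π / (K + 1)) * (e θ ^ (K + 1) + 1) := by
  have key := quadratic_mul_sum_Icc_of_recurrence (w := fun j => (sineWeight K j : ℂ))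
    (c := Real.cos (π / (K + 1)))
    (fun i => by exact_mod_cast sineWeight_recurrence K i) (e θ) K
  simp only [sineWeight_self, sineWeight_succ_self, sineWeight_zero, sineWeight_one,
    Complex.ofReal_zero, zero_mul, sub_zero] at key
  rw [trigPoly_eq_sum_pow]
  set P := ∑ j ∈ Icc 1 K, (sineWeight K j : ℂ) * e θ ^ j
  have hu : e θ ≠ 0 := by rw [← norm_ne_zero_iff, norm_e]; exact one_ne_zero
  refine mul_left_cancel₀ hu ?_
  linear_combination key + P * e_mul_conj_self θ - e θ * P * e_add_conj θ

lemma e_pow_mul_conj_sineTrigPoly :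
    e θ ^ (K + 1) * conj (trigPoly (sineWeight K) (Icc 1 K) θ) =
      trigPoly (sineWeight K) (Icc 1 K) θ := by
  rw [trigPoly_eq_sum_pow, map_sum, mul_sum]
  calc ∑ j ∈ Icc 1 K, e θ ^ (K + 1) * conj ((sineWeight K j : ℂ) * e θ ^ j)
      = ∑ j ∈ Icc 1 K, (sineWeight K (K + 1 - j) : ℂ) * e θ ^ (K + 1 - j) := by
        refine sum_congr rfl fun j hj => ?_
        have hj : j ≤ K + 1 := by simp only [mem_Icc] at hj; omega
        rw [sineWeight_reflect K hj, map_mul, Complex.conj_ofReal, map_pow,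
          ← Nat.sub_add_cancel hj, pow_add, Nat.add_sub_cancel]
        have hpow : e θ ^ j * conj (e θ) ^ j = 1 := by rw [← mul_pow, e_mul_conj_self, one_pow]
        linear_combination (sineWeight K j : ℂ) * e θ ^ (K + 1 - j) * hpow
    _ = ∑ j ∈ Icc 1 K, (sineWeight K j : ℂ) * e θ ^ j :=
        sum_Icc_one_reflect (fun j => (sineWeight K j : ℂ) * e θ ^ j) K

end SineTrigPoly

lemma cos_sub_mul_norm_sineTrigPoly_sq (K : ℕ) (θ : ℝ) :
    (Real.cos (2 * π * θ) - Real.cos (π / (K + 1))) * ‖trigPoly (sineWeight K) (Icc 1 K) θ‖ ^ 2 =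
      Real.sin (π / (K + 1)) * (trigPoly (sineWeight K) (Icc 1 K) θ).re := by
  set P := trigPoly (sineWeight K) (Icc 1 K) θ
  have hre : ((P.re : ℝ) : ℂ) = (P + conj P) / 2 := by rw [Complex.add_conj]; push_cast; ring
  have h : ((Real.cos (2 * π * θ) - Real.cos (π / (K + 1)) : ℝ) : ℂ) * (P * conj P) =
      ((Real.sin (π / (K + 1)) * P.re : ℝ) : ℂ) := by
    rw [Complex.ofReal_mul, Complex.ofReal_sub, hre]
    linear_combination (conj P / 2) * two_mul_cos_sub_mul_sineTrigPoly K θ +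
      (Real.sin (π / (K + 1)) / 2 : ℂ) * e_pow_mul_conj_sineTrigPoly K θ
  rw [Complex.mul_conj, ← Complex.ofReal_mul, Complex.ofReal_inj,
    Complex.normSq_eq_norm_sq] at h
  exact h

noncomputable def expSum {ι : Type*} [Fintype ι] (x : ι → ℝ) (m : ℤ) : ℂ := ∑ n, e (m * x n)

section ExpSum

variable {ι : Type*} [Fintype ι] (x : ι → ℝ)

lemma expSum_zero : expSum x 0 = Fintype.card ι := by simp [expSum, e_zero]

lemma norm_expSum_neg (m : ℤ) : ‖expSum x (-m)‖ = ‖expSum x m‖ := by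
  rw [← Complex.norm_conj (expSum x m), expSum, expSum, map_sum]
  simp only [conj_e, Int.cast_neg, neg_mul]

lemma sum_trigPoly (w : ℕ → ℝ) (J : Finset ℕ) :
    ∑ n, trigPoly w J (x n) = ∑ j ∈ J, (w j : ℂ) * expSum x j := by
  simp only [trigPoly, expSum, mul_sum, Int.cast_natCast]
  exact sum_comm

lemma sum_mul_conj_trigPoly (w : ℕ → ℝ) (J : Finset ℕ) :
    ∑ n, trigPoly w J (x n) * conj (trigPoly w J (x n)) =
      ∑ j ∈ J, ∑ k ∈ J, ((w j * w k : ℝ) : ℂ) * expSum x (j - k) := by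
  simp only [trigPoly, map_sum, map_mul, Complex.conj_ofReal, conj_e, sum_mul_sum]
  rw [sum_comm]
  refine sum_congr rfl fun j _ => ?_
  rw [sum_comm]
  refine sum_congr rfl fun k _ => ?_
  rw [expSum, mul_sum]
  refine sum_congr rfl fun n _ => ?_
  have : e (j * x n) * e (-(k * x n)) = e (((j - k : ℤ) : ℝ) * x n) := by
    rw [← e_add]; push_cast; ring_nf
  rw [Complex.ofReal_mul, ← this]
  ring

lemma sum_norm_sq_trigPoly_ge (w : ℕ → ℝ) (J : Finset ℕ) (hw : ∀ j ∈ J, |w j| ≤ 1) :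
    (∑ j ∈ J, w j ^ 2) * Fintype.card ι - ∑ j ∈ J, ∑ k ∈ J.erase j, ‖expSum x (j - k)‖ ≤
      ∑ n, ‖trigPoly w J (x n)‖ ^ 2 := by
  calc (∑ j ∈ J, w j ^ 2) * Fintype.card ι - ∑ j ∈ J, ∑ k ∈ J.erase j, ‖expSum x (j - k)‖
      = ∑ j ∈ J, (w j ^ 2 * Fintype.card ι - ∑ k ∈ J.erase j, ‖expSum x (j - k)‖) := by
        rw [sum_sub_distrib, sum_mul]
    _ ≤ ∑ j ∈ J, (∑ k ∈ J, ((w j * w k : ℝ) : ℂ) * expSum x (j - k)).re := by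
        refine sum_le_sum fun j hj => ?_
        rw [← add_sum_erase _ _ hj, Complex.add_re, sub_self, expSum_zero, sub_eq_add_neg]
        gcongr
        · simp [sq]
        · refine neg_sum_norm_le_re_sum_ofReal_mul _ (fun k hk => ?_) _
          rw [abs_mul]
          exact mul_le_one₀ (hw j hj) (abs_nonneg _) (hw k (mem_of_mem_erase hk))
    _ = ∑ n, ‖trigPoly w J (x n)‖ ^ 2 := by
        rw [← Complex.re_sum, ← sum_mul_conj_trigPoly, Complex.re_sum]
        simp only [Complex.mul_conj, Complex.normSq_eq_norm_sq, Complex.ofReal_re]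

lemma sum_erase_norm_expSum_sub_le {K j : ℕ} (hj : j ∈ Icc 1 K) :
    ∑ k ∈ (Icc 1 K).erase j, ‖expSum x (j - k)‖ ≤ 2 * ∑ d ∈ Icc 1 K, ‖expSum x d‖ := by
  simp only [mem_Icc] at hj
  have hF : ∀ d ∈ Icc 1 K, 0 ≤ ‖expSum x d‖ := fun _ _ => norm_nonneg _
  rw [← sum_filter_add_sum_filter_not _ (· < j), two_mul]
  gcongr ?_ + ?_
  · calc _ = ∑ k ∈ ((Icc 1 K).erase j).filter (· < j), ‖expSum x ((j - k : ℕ) : ℤ)‖ :=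
          sum_congr rfl fun k hk => by
            simp only [mem_filter] at hk; rw [Nat.cast_sub hk.2.le]
      _ ≤ _ := sum_comp_le_sum_of_injOn (f := fun d : ℕ => ‖expSum x d‖)
          (fun a ha b hb hab => by simp only [coe_filter, Set.mem_ofPred_eq] at ha hb hab; omega)
          (fun k hk => by simp only [mem_filter, mem_erase, mem_Icc] at hk ⊢; omega) hF
  · calc _ = ∑ k ∈ ((Icc 1 K).erase j).filter (¬ · < j), ‖expSum x ((k - j : ℕ) : ℤ)‖ :=
          sum_congr rfl fun k hk => by
            simp only [mem_filter, not_lt] at hk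
            rw [← norm_expSum_neg, Nat.cast_sub hk.2, neg_sub]
      _ ≤ _ := sum_comp_le_sum_of_injOn (f := fun d : ℕ => ‖expSum x d‖)
          (fun a ha b hb hab => by simp only [coe_filter, Set.mem_ofPred_eq] at ha hb hab; omega)
          (fun k hk => by simp only [mem_filter, mem_erase, mem_Icc] at hk ⊢; omega) hF

end ExpSum

lemma cos_two_pi_mul_nint (x : ℝ) : Real.cos (2 * π * nint x) = Real.cos (2 * π * x) := by
  rw [nint, ← abs_of_pos two_pi_pos, ← abs_mul, Real.cos_abs, abs_of_pos two_pi_pos,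
    mul_sub, ← Real.cos_add_int_mul_two_pi _ (round x)]
  ring_nf

lemma cos_two_pi_mul_le_of_inv_le_nint {H x : ℝ} (hH : 0 < H) (hx : H⁻¹ ≤ nint x) :
    Real.cos (2 * π * x) ≤ Real.cos (2 * π / H) := by
  rw [← cos_two_pi_mul_nint]
  have hhalf : nint x ≤ 1 / 2 := abs_sub_round x
  apply Real.cos_le_cos_of_nonneg_of_le_pi (by positivity)
  · nlinarith [pi_pos]
  · rw [div_eq_mul_inv]; exact mul_le_mul_of_nonneg_left hx two_pi_pos.le

lemma three_div_sq_le_cos_sub_cos {K : ℕ} {H : ℝ} (hH : 2 ≤ H) (hHK : H ≤ K + 1) :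
    3 / H ^ 2 ≤ Real.cos (π / (K + 1)) - Real.cos (2 * π / H) := by
  have hH0 : 0 < H := by linarith
  have hA : π / (K + 1) ≤ π / H := div_le_div_of_nonneg_left pi_pos.le hH0 hHK
  have hcosA : 1 - (π / H) ^ 2 / 2 ≤ Real.cos (π / (K + 1)) := by
    have := one_sub_sq_div_two_le_cos (x := π / (K + 1))
    have : (π / (K + 1)) ^ 2 ≤ (π / H) ^ 2 := pow_le_pow_left₀ (by positivity) hA 2
    linarith
  have hcos : Real.cos (2 * π / H) ≤ 1 - 2 / π ^ 2 * (2 * π / H) ^ 2 := by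
    refine cos_le_one_sub_mul_cos_sq ?_
    rw [abs_of_pos (by positivity), div_le_iff₀ hH0]
    nlinarith [pi_pos]
  have hpi : π ^ 2 ≤ 10 := by nlinarith [pi_lt_d2, pi_pos]
  have e1 : (π / H) ^ 2 / 2 = π ^ 2 / 2 / H ^ 2 := by ring
  have e2 : 2 / π ^ 2 * (2 * π / H) ^ 2 = 8 / H ^ 2 := by field_simp; ring
  have : π ^ 2 / 2 / H ^ 2 ≤ 5 / H ^ 2 := by gcongr; linarith
  rw [e1] at hcosA
  rw [e2] at hcos
  linarith [show 8 / H ^ 2 - 5 / H ^ 2 = 3 / H ^ 2 by ring]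

lemma cos_sub_cos_two_pi_div_le (A H : ℝ) :
    Real.cos A - Real.cos (2 * π / H) ≤ 2 * π ^ 2 / H ^ 2 := by
  have := one_sub_sq_div_two_le_cos (x := 2 * π / H)
  have : (2 * π / H) ^ 2 / 2 = 2 * π ^ 2 / H ^ 2 := by ring
  linarith [Real.cos_le_one A]

lemma cos_sub_cos_mul_card_sub_le {ι : Type*} [Fintype ι] (x : ι → ℝ) {H : ℝ} (hH : 0 < H)
    (hx : ∀ n, H⁻¹ ≤ nint (x n)) {K : ℕ} (hK : 1 ≤ K)
    (hc : Real.cos (2 * π / H) ≤ Real.cos (π / (K + 1))) :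
    (Real.cos (π / (K + 1)) - Real.cos (2 * π / H)) *
        ((K + 1) / 2 * Fintype.card ι - K * (2 * ∑ h ∈ Icc 1 K, ‖expSum x h‖)) ≤
      Real.sin (π / (K + 1)) * ∑ h ∈ Icc 1 K, ‖expSum x h‖ := by
  set A := π / (K + 1)
  set c := Real.cos (2 * π / H)
  set P := fun n => trigPoly (sineWeight K) (Icc 1 K) (x n)
  set T := ∑ h ∈ Icc 1 K, ‖expSum x h‖
  have hsign : ∑ n, (Real.cos (2 * π * x n) - c) * ‖P n‖ ^ 2 ≤ 0 :=
    sum_nonpos fun n _ => mul_nonpos_of_nonpos_of_nonneg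
      (sub_nonpos.2 (cos_two_pi_mul_le_of_inv_le_nint hH (hx n))) (sq_nonneg _)
  have hsplit : ∑ n, (Real.cos (2 * π * x n) - c) * ‖P n‖ ^ 2 =
      (Real.cos A - c) * ∑ n, ‖P n‖ ^ 2 + Real.sin A * (∑ n, P n).re := by
    rw [mul_sum, Complex.re_sum, mul_sum, ← sum_add_distrib]
    refine sum_congr rfl fun n _ => ?_
    linear_combination cos_sub_mul_norm_sineTrigPoly_sq K (x n)
  have hquad : (K + 1) / 2 * Fintype.card ι - K * (2 * T) ≤ ∑ n, ‖P n‖ ^ 2 := by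
    refine le_trans ?_ (sum_norm_sq_trigPoly_ge x _ _ fun j _ => abs_sineWeight_le_one K j)
    rw [sum_sineWeight_sq K hK]
    gcongr
    refine (sum_le_sum fun j hj => sum_erase_norm_expSum_sub_le x hj).trans_eq ?_
    rw [sum_const, Nat.card_Icc, Nat.add_sub_cancel, nsmul_eq_mul]
  have hlin : -T ≤ (∑ n, P n).re := by
    rw [sum_trigPoly]
    exact neg_sum_norm_le_re_sum_ofReal_mul _ (fun j _ => abs_sineWeight_le_one K j) _
  have hsin : 0 ≤ Real.sin A :=
    sin_nonneg_of_nonneg_of_le_pi (by positivity) (div_le_self pi_pos.le (by linarith))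
  nlinarith [mul_le_mul_of_nonneg_left hquad (sub_nonneg.2 hc), mul_le_mul_of_nonneg_left hlin hsin]

theorem card_le_thirty_mul_sum_norm_expSum {ι : Type*} [Fintype ι] (x : ι → ℝ) {H : ℝ}
    (hH : 2 ≤ H) (hx : ∀ n, H⁻¹ ≤ nint (x n)) :
    (Fintype.card ι : ℝ) ≤ 30 * ∑ h ∈ Icc 1 ⌊H⌋₊, ‖expSum x h‖ := by
  have hH0 : 0 < H := by linarith
  set K := ⌊H⌋₊
  have hK : 1 ≤ K := Nat.le_floor (by push_cast; linarith)
  have hKH : (K : ℝ) ≤ H := Nat.floor_le hH0.le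
  have hHK : H ≤ K + 1 := (Nat.lt_floor_add_one H).le
  set N : ℝ := (Fintype.card ι : ℝ)
  set A := π / (K + 1)
  set g := Real.cos A - Real.cos (2 * π / H)
  set T := ∑ h ∈ Icc 1 K, ‖expSum x h‖
  have hg : 3 / H ^ 2 ≤ g := three_div_sq_le_cos_sub_cos hH hHK
  have hg' : g ≤ 2 * π ^ 2 / H ^ 2 := cos_sub_cos_two_pi_div_le A H
  have hg0 : 0 ≤ g := (by positivity : (0 : ℝ) ≤ 3 / H ^ 2).trans hg
  have key : g * ((K + 1) / 2 * N - K * (2 * T)) ≤ Real.sin A * T :=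
    cos_sub_cos_mul_card_sub_le x hH0 hx hK (sub_nonneg.1 hg0)
  rw [mul_sub] at key
  have hsinA : Real.sin A ≤ π / H :=
    (sin_le (by positivity)).trans (div_le_div_of_nonneg_left pi_pos.le hH0 hHK)
  have hT : 0 ≤ T := sum_nonneg fun _ _ => norm_nonneg _
  have hN : 0 ≤ N := Nat.cast_nonneg _
  have hlow : 3 / (2 * H) * N ≤ g * ((K + 1) / 2 * N) := by
    rw [← mul_assoc]
    refine mul_le_mul_of_nonneg_right ?_ hN
    calc 3 / (2 * H) = 3 / H ^ 2 * (H / 2) := by field_simp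
      _ ≤ g * ((K + 1) / 2) := by gcongr
  have hupp : Real.sin A * T + g * (K * (2 * T)) ≤ (4 * π ^ 2 + π) / H * T := by
    have hgK : g * K ≤ 2 * π ^ 2 / H :=
      calc g * K ≤ 2 * π ^ 2 / H ^ 2 * H := mul_le_mul hg' hKH (Nat.cast_nonneg _) (by positivity)
        _ = 2 * π ^ 2 / H := by field_simp
    calc Real.sin A * T + g * (K * (2 * T)) = Real.sin A * T + 2 * (g * K) * T := by ring
      _ ≤ π / H * T + 2 * (2 * π ^ 2 / H) * T := by gcongr
      _ = (4 * π ^ 2 + π) / H * T := by ring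
  have hfin : 3 / 2 * N ≤ (4 * π ^ 2 + π) * T := by
    have := hlow.trans ((sub_le_iff_le_add.1 key).trans hupp)
    rwa [show 3 / (2 * H) * N = 3 / 2 * N / H by ring,
      show (4 * π ^ 2 + π) / H * T = (4 * π ^ 2 + π) * T / H by ring,
      div_le_div_iff_of_pos_right hH0] at this
  have : (4 * π ^ 2 + π) * T ≤ 45 * T :=
    mul_le_mul_of_nonneg_right (by nlinarith [pi_lt_d2, pi_pos]) hT
  linarith

theorem statement13 :
    ∃ c : ℝ, 0 < c ∧ ∀ (N : ℕ) (x : Fin N → ℝ) (H : ℝ), 1 ≤ H →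
      (∀ n : Fin N, H⁻¹ ≤ nint (x n)) →
      c * N ≤ ∑ h ∈ Finset.Icc 1 ⌊H⌋₊, ‖∑ n : Fin N, e ((h : ℝ) * x n)‖ := by
  refine ⟨1 / 30, by norm_num, fun N x H hH1 hx => ?_⟩
  rcases Nat.eq_zero_or_pos N with rfl | hN
  · simp
  have hH : 2 ≤ H := by
    have h := (hx ⟨0, hN⟩).trans (abs_sub_round _)
    rwa [inv_le_comm₀ (by linarith) (by norm_num), inv_div, div_one] at h
  have := card_le_thirty_mul_sum_norm_expSum x hH hx
  simp only [Fintype.card_fin, expSum, Int.cast_natCast] at this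
  linarith
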